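/- Let ℓ > 1 be an integer with gcd(ℓ, 6) = 1 and let A, B be distinct letters. Then the word A B^{ℓ−1} is 2-slantable: C_2(A B^{ℓ−1}) = 8/ℓ. -/

import Mathlib

open scoped BigOperators

namespace WordGrid

variable {α : Type*}

/-- A valid word-search direction in dimension `d`: a nonzero vector with
entries in `{-1, 0, 1}`. -/
def IsDir (d : ℕ) (v : Fin d → ℤ) : Prop :=
  (∀ i, v i = -1 ∨ v i = 0 ∨ v i = 1) ∧ v ≠ 0

/-- `(p, v)` is an appearance of the word `w` in the grid `Γ` of shape
`ZMod (n 0) × ⋯ × ZMod (n (d-1))`: reading from `p` in direction `v`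
(reduced coordinatewise into the shape group) spells out `w`. -/
def Appears {d : ℕ} (n : Fin d → ℕ) (Γ : (∀ i, ZMod (n i)) → α) (w : List α)
    (p : ∀ i, ZMod (n i)) (v : Fin d → ℤ) : Prop :=
  IsDir d v ∧
    ∀ k : Fin w.length, Γ (fun j => p j + (((k : ℤ) * v j : ℤ) : ZMod (n j))) = w.get k

/-- The number of appearances of the word `w` in the grid `Γ`. -/
noncomputable def count {d : ℕ} (n : Fin d → ℕ) (Γ : (∀ i, ZMod (n i)) → α)
    (w : List α) : ℕ :=
  Set.ncard {pv : (∀ i, ZMod (n i)) × (Fin d → ℤ) | Appears n Γ w pv.1 pv.2}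

/-- The concentration of the word `w` in the grid `Γ`: the number of
appearances divided by the size of the grid. -/
noncomputable def conc {d : ℕ} (n : Fin d → ℕ) (Γ : (∀ i, ZMod (n i)) → α)
    (w : List α) : ℝ :=
  (count n Γ w : ℝ) / ((∏ i, n i : ℕ) : ℝ)

/-- `C d w`: the supremum of the concentration of `w` over all `d`-dimensional
grids (of all shapes with every side length positive). -/
noncomputable def C (d : ℕ) (w : List α) : ℝ :=
  sSup {x : ℝ | ∃ (n : Fin d → ℕ) (Γ : (∀ i, ZMod (n i)) → α),
    (∀ i, 0 < n i) ∧ x = conc n Γ w}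

/-- The word `w` contains at least two distinct letters. -/
def TwoLetters (w : List α) : Prop := ∃ x ∈ w, ∃ y ∈ w, x ≠ y



def dir8 : Finset (Fin 2 → ℤ) :=
  {![1,0], ![-1,0], ![0,1], ![0,-1], ![1,1], ![1,-1], ![-1,1], ![-1,-1]}
lemma card_dir8 : dir8.card = 8 := by decide

lemma isDir_iff {v : Fin 2 → ℤ} : IsDir 2 v ↔ v ∈ dir8 := by
  constructor
  · rintro ⟨h1, h2⟩
    have hv : v = ![v 0, v 1] := by funext i; fin_cases i <;> rfl
    have h0 := h1 0; have h1' := h1 1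
    rcases h0 with h|h|h <;> rcases h1' with h'|h'|h' <;>
      rw [h, h'] at hv <;>
      first
        | (rw [hv]; decide)
        | (exact absurd (hv.trans (by funext i; fin_cases i <;> rfl)) h2)
  · intro hv
    fin_cases hv <;> exact ⟨by decide, by decide⟩

lemma wlen (ℓ : ℕ) (hℓ : 1 < ℓ) (A B : α) :
    (A :: List.replicate (ℓ - 1) B).length = ℓ := by
  simp [Nat.sub_add_cancel hℓ.le]

lemma wget (ℓ : ℕ) (A B : α) (k : Fin (A :: List.replicate (ℓ - 1) B).length) :
    (A :: List.replicate (ℓ - 1) B).get k = if (k : ℕ) = 0 then A else B := by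
  rcases k with ⟨k, hk⟩
  match k with
  | 0 => rfl
  | (m+1) =>
    simp only [List.get_eq_getElem, List.getElem_cons_succ]
    rw [List.getElem_replicate]
    simp

lemma construction (ℓ : ℕ) (hℓ : 1 < ℓ) (h6 : Nat.gcd ℓ 6 = 1) (A B : α) (hAB : A ≠ B) :
    conc (fun _ : Fin 2 => ℓ) (fun p => if p 0 + 2 * p 1 = 0 then A else B)
      (A :: List.replicate (ℓ - 1) B) = 8 / (ℓ : ℝ) := by
  haveI : NeZero ℓ := ⟨by omega⟩
  set w := A :: List.replicate (ℓ - 1) B with hw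
  have hwl : w.length = ℓ := wlen ℓ hℓ A B
  set Γ : (Fin 2 → ZMod ℓ) → α := fun p => if p 0 + 2 * p 1 = 0 then A else B with hΓ
  set D : Set (Fin 2 → ZMod ℓ) := {p | p 0 + 2 * p 1 = 0} with hD
  -- units
  have hcop : ∀ c : ℕ, c ∣ 6 → c ≠ 0 → IsUnit ((c : ℕ) : ZMod ℓ) := by
    intro c hc hc0
    rw [ZMod.isUnit_iff_coprime]
    exact Nat.Coprime.symm (Nat.Coprime.coprime_dvd_right hc h6)
  have h1u : IsUnit (1 : ZMod ℓ) := isUnit_one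
  have h2u : IsUnit (2 : ZMod ℓ) := by
    have := hcop 2 (by norm_num) (by norm_num); simpa using this
  have h3u : IsUnit (3 : ZMod ℓ) := by
    have := hcop 3 (by norm_num) (by norm_num); simpa using this
  -- unit linear form values
  have hunit : ∀ v ∈ dir8, IsUnit (((v 0 : ℤ) : ZMod ℓ) + 2 * ((v 1 : ℤ) : ZMod ℓ)) := by
    intro v hv
    fin_cases hv <;>
      · simp only [Matrix.cons_val_zero, Matrix.cons_val_one, Matrix.head_cons]
        push_cast
        first
          | simpa using h1u
          | simpa using h2u
          | simpa using h3u
          | (ring_nf; first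
              | simpa using h1u.neg
              | simpa using h2u.neg
              | simpa using h3u.neg
              | simpa using h1u
              | simpa using h2u
              | simpa using h3u)
  -- set equality
  have hset : {pv : (Fin 2 → ZMod ℓ) × (Fin 2 → ℤ) | Appears (fun _ : Fin 2 => ℓ) Γ w pv.1 pv.2}
      = D ×ˢ (↑dir8 : Set (Fin 2 → ℤ)) := by
    ext ⟨p, v⟩
    simp only [Set.mem_setOf_eq, Set.mem_prod, Finset.coe_sort_coe, Set.mem_setOf_eq,
      Finset.mem_coe]
    constructor
    · rintro ⟨hd, hk⟩
      refine ⟨?_, isDir_iff.mp hd⟩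
      have h0 := hk ⟨0, by omega⟩
      rw [wget ℓ A B] at h0
      have harg : (fun j => p j + (((((⟨0, by omega⟩ : Fin w.length) : ℕ) : ℤ) * v j : ℤ) : ZMod ℓ)) = p := by
        funext j; simp
      rw [harg] at h0
      have hA : Γ p = A := by
        rw [h0]; rfl
      by_contra hne
      simp only [hD, Set.mem_setOf_eq] at hne
      have hB : Γ p = B := if_neg hne
      exact hAB (hA.symm.trans hB)
    · rintro ⟨hp, hv⟩
      refine ⟨isDir_iff.mpr hv, ?_⟩
      intro k
      rw [wget ℓ A B]
      by_cases hk0 : (k : ℕ) = 0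
      · have harg : (fun j => p j + ((((k : ℕ) : ℤ) * v j : ℤ) : ZMod ℓ)) = p := by
          funext j; simp [hk0]
        rw [harg, if_pos hk0]
        simp only [hD, Set.mem_setOf_eq] at hp
        exact if_pos hp
      · rw [if_neg hk0]
        have hval : (fun j => p j + ((((k : ℕ) : ℤ) * v j : ℤ) : ZMod ℓ)) 0
            + 2 * (fun j => p j + ((((k : ℕ) : ℤ) * v j : ℤ) : ZMod ℓ)) 1
            = ((k : ℕ) : ZMod ℓ) * (((v 0 : ℤ) : ZMod ℓ) + 2 * ((v 1 : ℤ) : ZMod ℓ)) := by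
          simp only [hD, Set.mem_setOf_eq] at hp
          push_cast
          linear_combination hp
        have hkne : ((k : ℕ) : ZMod ℓ) ≠ 0 := by
          rw [Ne, ZMod.natCast_eq_zero_iff]
          intro hdvd
          have hklt : (k : ℕ) < ℓ := by rw [← hwl]; exact k.2
          exact absurd (Nat.le_of_dvd (Nat.pos_of_ne_zero hk0) hdvd) (not_le.mpr hklt)
        have hne : (fun j => p j + ((((k : ℕ) : ℤ) * v j : ℤ) : ZMod ℓ)) 0
            + 2 * (fun j => p j + ((((k : ℕ) : ℤ) * v j : ℤ) : ZMod ℓ)) 1 ≠ 0 := by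
          rw [hval]
          intro h0
          exact hkne (((hunit v hv).mul_left_eq_zero).mp h0)
        exact if_neg hne
  -- cardinalities
  have hcount : count (fun _ : Fin 2 => ℓ) Γ w = 8 * ℓ := by
    rw [count, hset]
    rw [← Nat.card_coe_set_eq]
    rw [Nat.card_congr (Equiv.Set.prod D (↑dir8 : Set (Fin 2 → ℤ))), Nat.card_prod]
    have hDcard : Nat.card D = ℓ := by
      have e : D ≃ ZMod ℓ :=
        { toFun := fun p => p.1 1
          invFun := fun z => ⟨![-(2 * z), z], by simp [hD]⟩
          left_inv := by
            rintro ⟨p, hp⟩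
            simp only [hD, Set.mem_setOf_eq] at hp
            ext i
            fin_cases i
            · show -(2 * p 1) = p 0
              linear_combination -hp
            · rfl
          right_inv := fun z => rfl }
      rw [Nat.card_congr e, Nat.card_zmod]
    have hdcard : Nat.card (↑dir8 : Set (Fin 2 → ℤ)) = 8 := by
      rw [Nat.card_coe_set_eq, Set.ncard_coe_finset, card_dir8]
    rw [hDcard, hdcard, Nat.mul_comm]
  unfold conc
  rw [hcount]
  have hl0 : (0 : ℝ) < (ℓ : ℝ) := by positivity
  rw [show (∏ _i : Fin 2, ℓ) = ℓ * ℓ by simp [Fin.prod_univ_two, pow_two]]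
  push_cast
  field_simp

lemma key_upper (ℓ : ℕ) (hℓ : 1 < ℓ) (A B : α) (hAB : A ≠ B)
    (n : Fin 2 → ℕ) (hn : ∀ i, 0 < n i) (Γ : (∀ i, ZMod (n i)) → α) :
    ℓ * count n Γ (A :: List.replicate (ℓ - 1) B) ≤ 8 * ∏ i, n i := by
  haveI : ∀ i, NeZero (n i) := fun i => ⟨(hn i).ne'⟩
  set w := A :: List.replicate (ℓ - 1) B with hw
  have hwl : w.length = ℓ := wlen ℓ hℓ A B
  set S : Set ((∀ i, ZMod (n i)) × (Fin 2 → ℤ)) := {pv | Appears n Γ w pv.1 pv.2} with hS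
  -- the injection
  set ψ : ↥S × Fin ℓ → (∀ i, ZMod (n i)) × {v // v ∈ dir8} :=
    fun x => (fun j => x.1.1.1 j + (((x.2 : ℤ) * x.1.1.2 j : ℤ) : ZMod (n j)),
      ⟨x.1.1.2, by
        have h := x.1.2
        have hd : IsDir 2 x.1.1.2 := h.1
        rcases hd with ⟨h1, h2⟩
        have hv : x.1.1.2 = ![x.1.1.2 0, x.1.1.2 1] := by funext i; fin_cases i <;> rfl
        have h0 := h1 0; have h1' := h1 1
        rcases h0 with h'|h'|h' <;> rcases h1' with h''|h''|h'' <;>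
          rw [h', h''] at hv <;>
          first
            | (rw [hv]; decide)
            | (exact absurd (hv.trans (by funext i; fin_cases i <;> rfl)) h2)⟩) with hψ
  have hinj : Function.Injective ψ := by
    rintro ⟨⟨⟨p, v⟩, hp⟩, i⟩ ⟨⟨⟨q, u⟩, hq⟩, j⟩ heq
    simp only [hψ, Prod.mk.injEq, Subtype.mk.injEq] at heq
    obtain ⟨hfun, hvu⟩ := heq
    subst hvu
    -- helper: if (j:ℕ) ≤ i and p + i v = q + j v pointwise then i = j and p = q
    have main : ∀ (p' q' : ∀ i, ZMod (n i)) (i' j' : Fin ℓ), Appears n Γ w p' v → Appears n Γ w q' v →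
        (j' : ℕ) ≤ (i' : ℕ) →
        ((fun jj => p' jj + (((i' : ℤ) * v jj : ℤ) : ZMod (n jj))) =
          fun jj => q' jj + (((j' : ℤ) * v jj : ℤ) : ZMod (n jj))) → (i' : ℕ) = (j' : ℕ) := by
      intro p' q' i' j' hp' hq' hle hfe
      by_contra hne
      have hm : 0 < (i' : ℕ) - (j' : ℕ) := by omega
      have hmlt : (i' : ℕ) - (j' : ℕ) < w.length := by omega
      have hq0 : Γ q' = A := by
        have h0 := hq'.2 ⟨0, by omega⟩
        rw [wget ℓ A B] at h0
        simpa using h0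
      have hpm := hp'.2 ⟨(i' : ℕ) - (j' : ℕ), hmlt⟩
      rw [wget ℓ A B] at hpm
      simp only [if_neg hm.ne'] at hpm
      -- show the argument equals q'
      have harg : (fun jj => p' jj + ((((i' : ℕ) - (j' : ℕ) : ℕ) * v jj : ℤ) : ZMod (n jj))) = q' := by
        funext jj
        have := congrFun hfe jj
        have hc : (((i' : ℕ) - (j' : ℕ) : ℕ) : ℤ) = (i' : ℤ) - (j' : ℤ) := by
          push_cast; omega
        have : p' jj + (((i' : ℤ) * v jj : ℤ) : ZMod (n jj)) = q' jj + (((j' : ℤ) * v jj : ℤ) : ZMod (n jj)) := this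
        have hgoal : p' jj + ((((i' : ℤ) - (j' : ℤ)) * v jj : ℤ) : ZMod (n jj)) = q' jj := by
          push_cast at this ⊢
          linear_combination this
        rw [hc]
        exact hgoal
      rw [show ((⟨(i' : ℕ) - (j' : ℕ), hmlt⟩ : Fin w.length) : ℤ) = (((i' : ℕ) - (j' : ℕ) : ℕ) : ℤ) from rfl] at hpm
      rw [harg] at hpm
      rw [hq0] at hpm
      exact hAB hpm
    have hij : (i : ℕ) = (j : ℕ) := by
      rcases le_total (j : ℕ) (i : ℕ) with h | h
      · exact main p q i j hp hq h hfun
      · exact (main q p j i hq hp h hfun.symm).symm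
    have hpq : p = q := by
      funext jj
      have := congrFun hfun jj
      simp only [hij] at this
      exact add_right_cancel this
    simp [Prod.ext_iff, Subtype.ext_iff, hpq, Fin.ext_iff, hij]
  have hcard : Nat.card (↥S × Fin ℓ) ≤ Nat.card ((∀ i, ZMod (n i)) × {v // v ∈ dir8}) :=
    Nat.card_le_card_of_injective ψ hinj
  rw [Nat.card_prod, Nat.card_prod, Nat.card_eq_fintype_card (α := Fin ℓ), Fintype.card_fin,
    Nat.card_coe_set_eq, Nat.card_pi] at hcard
  have h8 : Nat.card {v // v ∈ dir8} = 8 := by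
    rw [Nat.card_eq_fintype_card, Fintype.card_coe, card_dir8]
  rw [h8] at hcard
  have hzc : ∀ i, Nat.card (ZMod (n i)) = n i := fun i => Nat.card_zmod (n i)
  simp only [hzc] at hcard
  calc ℓ * count n Γ w = count n Γ w * ℓ := Nat.mul_comm _ _
    _ ≤ (∏ i, n i) * 8 := hcard
    _ = 8 * ∏ i, n i := Nat.mul_comm _ _

theorem statement9 (ℓ : ℕ) (hℓ : 1 < ℓ) (h6 : Nat.gcd ℓ 6 = 1)
    (A B : α) (hAB : A ≠ B) :
    C 2 (A :: List.replicate (ℓ - 1) B) = 8 / (ℓ : ℝ) := by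
  apply IsGreatest.csSup_eq
  constructor
  · have h0 : 0 < ℓ := by omega
    exact ⟨fun _ => ℓ, fun p => if p 0 + 2 * p 1 = 0 then A else B, fun _ => h0,
      (construction ℓ hℓ h6 A B hAB).symm⟩
  · rintro x ⟨n, Γ, hn, rfl⟩
    have key := key_upper ℓ hℓ A B hAB n hn Γ
    unfold conc
    have hN : (0:ℝ) < ((∏ i, n i : ℕ) : ℝ) := by
      exact_mod_cast Finset.prod_pos (fun i _ => hn i)
    have hl : (0:ℝ) < (ℓ:ℝ) := by exact_mod_cast (by omega : 0 < ℓ)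
    rw [div_le_div_iff₀ hN hl]
    have hkey : ((ℓ * count n Γ (A :: List.replicate (ℓ - 1) B) : ℕ) : ℝ)
        ≤ ((8 * ∏ i, n i : ℕ) : ℝ) := by exact_mod_cast key
    push_cast at hkey ⊢
    linarith

end WordGrid
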